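/- arXiv:2211.06217 — 8 statements merged into one kernel-verified Lean document; each statement's English description precedes it below -/
import Mathlib

section
/- Weakening is admissible in the multimodal natural deduction system: if Γ, φ@μ, Δ is a well-formed context at mode p and Γ, Δ ⊢ C @ p is derivable, then Γ, φ@μ, Δ ⊢ C @ p is derivable. -/
/-!
Multimodal intuitionistic logic (MTT's logical fragment), parametrized by a
mode theory, i.e. a strict 2-category `Md`: objects are modes, 1-cells are
modalities, 2-cells are transformations.
-/

open CategoryTheory

universe w v u

/-- Well-formed formulas of the multimodal logic, indexed by their mode. -/
inductive Fm (Md : Type u) [Bicategory.{w, v, u} Md] : Md → Type (max u v) where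
  | pvar {m : Md} (i : ℕ) : Fm Md m
  | tru {m : Md} : Fm Md m
  | fls {m : Md} : Fm Md m
  | conj {m : Md} : Fm Md m → Fm Md m → Fm Md m
  | disj {m : Md} : Fm Md m → Fm Md m → Fm Md m
  | impl {n m : Md} (μ : n ⟶ m) : Fm Md n → Fm Md m → Fm Md m
  | mod {n m : Md} (μ : n ⟶ m) : Fm Md n → Fm Md m

/-- (Pre-)contexts: `Cx Md a m` is a context whose base mode is `a` and whose
final (current) mode is `m`.  Extension tags a formula with a modality; a lock
`Γ,🔒_μ` for `μ : n ⟶ m` transports a context at mode `m` to one at mode `n`. -/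
inductive Cx (Md : Type u) [Bicategory.{w, v, u} Md] : Md → Md → Type (max u v) where
  | nil {m : Md} : Cx Md m m
  | ext {a n m : Md} : Cx Md a m → (n ⟶ m) → Fm Md n → Cx Md a m
  | lock {a n m : Md} : Cx Md a m → (n ⟶ m) → Cx Md a n

variable {Md : Type u} [Bicategory.{w, v, u} Md]

namespace Cx

/-- Concatenation of contexts: append the entries of the second to the first. -/
def append {a : Md} : {m p : Md} → Cx Md a m → Cx Md m p → Cx Md a p
  | _, _, Γ, .nil => Γ
  | _, _, Γ, .ext Δ μ φ => .ext (Γ.append Δ) μ φ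
  | _, _, Γ, .lock Δ μ => .lock (Γ.append Δ) μ

/-- `locks Γ` is the composite of all the lock modalities occurring in `Γ`:
`locks(·) = 1`, `locks(Γ, φ@μ) = locks(Γ)`, `locks(Γ,🔒_μ) = locks(Γ) ∘ μ`. -/
def locks : {a m : Md} → Cx Md a m → (m ⟶ a)
  | _, _, .nil => 𝟙 _
  | _, _, .ext Γ _ _ => Γ.locks
  | _, _, .lock Γ μ => μ ≫ Γ.locks

end Cx

/-- The identifications of contexts: the congruence generated by
`Γ,🔒_{1_m} = Γ` and `Γ,🔒_μ,🔒_ν = Γ,🔒_{μ∘ν}`. -/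
inductive CxEq : {a m : Md} → Cx Md a m → Cx Md a m → Prop where
  | refl {a m : Md} (Γ : Cx Md a m) : CxEq Γ Γ
  | symm {a m : Md} {Γ Δ : Cx Md a m} : CxEq Γ Δ → CxEq Δ Γ
  | trans {a m : Md} {Γ Δ Θ : Cx Md a m} : CxEq Γ Δ → CxEq Δ Θ → CxEq Γ Θ
  | ext {a n m : Md} {Γ Δ : Cx Md a m} (μ : n ⟶ m) (φ : Fm Md n) :
      CxEq Γ Δ → CxEq (Γ.ext μ φ) (Δ.ext μ φ)
  | lock {a n m : Md} {Γ Δ : Cx Md a m} (μ : n ⟶ m) :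
      CxEq Γ Δ → CxEq (Γ.lock μ) (Δ.lock μ)
  | lock_id {a m : Md} (Γ : Cx Md a m) : CxEq (Γ.lock (𝟙 m)) Γ
  | lock_comp {a o n m : Md} (Γ : Cx Md a m) (μ : n ⟶ m) (ν : o ⟶ n) :
      CxEq ((Γ.lock μ).lock ν) (Γ.lock (ν ≫ μ))

/-- The natural deduction system of the multimodal logic: `Der Γ φ` means
`Γ ⊢ φ @ m`.  Contexts are identified up to `CxEq` (rule `conv`). -/
inductive Der : {a m : Md} → Cx Md a m → Fm Md m → Prop where
  /-- Variable rule: from `μ : n ⟶ m` and a transformation `α : μ ⇒ locks(Δ)`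
  infer `Γ, φ@μ, Δ ⊢ φ @ n`. -/
  | var {a m n : Md} (Γ : Cx Md a m) (μ : n ⟶ m) (φ : Fm Md n) (Δ : Cx Md m n)
      (α : μ ⟶ Δ.locks) : Der ((Γ.ext μ φ).append Δ) φ
  | truI {a m : Md} (Γ : Cx Md a m) : Der Γ .tru
  | flsE {a m : Md} {Γ : Cx Md a m} {φ : Fm Md m} : Der Γ .fls → Der Γ φ
  | conjI {a m : Md} {Γ : Cx Md a m} {φ ψ : Fm Md m} :
      Der Γ φ → Der Γ ψ → Der Γ (φ.conj ψ)
  | conjE₁ {a m : Md} {Γ : Cx Md a m} {φ ψ : Fm Md m} : Der Γ (φ.conj ψ) → Der Γ φ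
  | conjE₂ {a m : Md} {Γ : Cx Md a m} {φ ψ : Fm Md m} : Der Γ (φ.conj ψ) → Der Γ ψ
  | disjI₁ {a m : Md} {Γ : Cx Md a m} {φ ψ : Fm Md m} : Der Γ φ → Der Γ (φ.disj ψ)
  | disjI₂ {a m : Md} {Γ : Cx Md a m} {φ ψ : Fm Md m} : Der Γ ψ → Der Γ (φ.disj ψ)
  | disjE {a m : Md} {Γ : Cx Md a m} {φ ψ χ : Fm Md m} :
      Der Γ (φ.disj ψ) → Der (Γ.ext (𝟙 m) φ) χ → Der (Γ.ext (𝟙 m) ψ) χ → Der Γ χ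
  /-- Implication introduction. -/
  | implI {a n m : Md} {Γ : Cx Md a m} {μ : n ⟶ m} {φ : Fm Md n} {ψ : Fm Md m} :
      Der (Γ.ext μ φ) ψ → Der Γ (.impl μ φ ψ)
  /-- Modal modus ponens. -/
  | implE {a n m : Md} {Γ : Cx Md a m} {μ : n ⟶ m} {φ : Fm Md n} {ψ : Fm Md m} :
      Der Γ (.impl μ φ ψ) → Der (Γ.lock μ) φ → Der Γ ψ
  /-- Modal introduction. -/
  | modI {a n m : Md} {Γ : Cx Md a m} {μ : n ⟶ m} {φ : Fm Md n} :
      Der (Γ.lock μ) φ → Der Γ (.mod μ φ)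
  /-- Modal elimination. -/
  | modE {a o n m : Md} {Γ : Cx Md a m} {ν : o ⟶ n} {μ : n ⟶ m} {φ : Fm Md o}
      {ψ : Fm Md m} :
      Der (Γ.lock μ) (.mod ν φ) → Der (Γ.ext (ν ≫ μ) φ) ψ → Der Γ ψ
  /-- Contexts are identified up to `CxEq`. -/
  | conv {a m : Md} {Γ Δ : Cx Md a m} {φ : Fm Md m} : CxEq Γ Δ → Der Γ φ → Der Δ φ

/-!
Weakening holds for arbitrary thinnings of the context, by induction on derivations. All rules but
the variable rule only extend the context by entries or locks, and thinnings commute with that.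
For the variable rule, all that matters about a context is which hypotheses `φ@μ` it holds and
behind which composite of locks; this is preserved by thinnings and, since the mode theory is
strict, by the identifications `CxEq`. The `conv` rule is absorbed by proving the statement for
every context `CxEq` to the one of the derivation.
-/

namespace Cx

/-- `Occurs μ φ Θ ℓ`: the context `Θ` has the form `Γ, φ@μ, Δ` with `locks Δ = ℓ`. -/
inductive Occurs {a m n : Md} (μ : n ⟶ m) (φ : Fm Md n) : {q : Md} → Cx Md a q → (q ⟶ m) → Prop
  | here (Γ : Cx Md a m) : Occurs μ φ (Γ.ext μ φ) (𝟙 m)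
  | ext {q k : Md} {Γ : Cx Md a q} {ℓ : q ⟶ m} (ν : k ⟶ q) (ψ : Fm Md k) :
      Occurs μ φ Γ ℓ → Occurs μ φ (Γ.ext ν ψ) ℓ
  | lock {q k : Md} {Γ : Cx Md a q} {ℓ : q ⟶ m} (ν : k ⟶ q) :
      Occurs μ φ Γ ℓ → Occurs μ φ (Γ.lock ν) (ν ≫ ℓ)

inductive Thinning {a : Md} : {q : Md} → Cx Md a q → Cx Md a q → Prop
  | refl {q : Md} (Γ : Cx Md a q) : Thinning Γ Γ
  | drop {q k : Md} {Γ Γ' : Cx Md a q} (ν : k ⟶ q) (ψ : Fm Md k) :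
      Thinning Γ Γ' → Thinning Γ (Γ'.ext ν ψ)
  | keep {q k : Md} {Γ Γ' : Cx Md a q} (ν : k ⟶ q) (ψ : Fm Md k) :
      Thinning Γ Γ' → Thinning (Γ.ext ν ψ) (Γ'.ext ν ψ)
  | lock {q k : Md} {Γ Γ' : Cx Md a q} (ν : k ⟶ q) :
      Thinning Γ Γ' → Thinning (Γ.lock ν) (Γ'.lock ν)

variable {a m n : Md} {μ : n ⟶ m} {φ : Fm Md n}

@[simp] theorem append_nil (Γ : Cx Md a m) : Γ.append .nil = Γ := by rw [append]

@[simp] theorem append_ext {q k : Md} (Γ : Cx Md a m) (Δ : Cx Md m q) (ν : k ⟶ q)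
    (ψ : Fm Md k) : Γ.append (Δ.ext ν ψ) = (Γ.append Δ).ext ν ψ := by rw [append]

@[simp] theorem append_lock {q k : Md} (Γ : Cx Md a m) (Δ : Cx Md m q) (ν : k ⟶ q) :
    Γ.append (Δ.lock ν) = (Γ.append Δ).lock ν := by rw [append]

@[simp] theorem locks_nil : (nil : Cx Md m m).locks = 𝟙 m := by rw [locks]

@[simp] theorem locks_ext (Γ : Cx Md a m) (μ : n ⟶ m) (φ : Fm Md n) :
    (Γ.ext μ φ).locks = Γ.locks := by rw [locks]

@[simp] theorem locks_lock (Γ : Cx Md a m) (μ : n ⟶ m) :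
    (Γ.lock μ).locks = μ ≫ Γ.locks := by rw [locks]

theorem occurs_ext_append_locks (Γ : Cx Md a m) (μ : n ⟶ m) (φ : Fm Md n) {q : Md}
    (Δ : Cx Md m q) : Occurs μ φ ((Γ.ext μ φ).append Δ) Δ.locks := by
  induction Δ with
  | nil => simpa using .here Γ
  | ext Δ ν ψ ih => simpa using ih.ext ν ψ
  | lock Δ ν ih => simpa using ih.lock ν

theorem Occurs.exists_eq_ext_append {q : Md} {Θ : Cx Md a q} {ℓ : q ⟶ m}
    (h : Occurs μ φ Θ ℓ) :
    ∃ (Γ : Cx Md a m) (Δ : Cx Md m q), Θ = (Γ.ext μ φ).append Δ ∧ Δ.locks = ℓ := by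
  induction h with
  | here Γ => exact ⟨Γ, .nil, by simp, by simp⟩
  | ext ν ψ _ ih =>
    obtain ⟨Γ, Δ, rfl, rfl⟩ := ih
    exact ⟨Γ, Δ.ext ν ψ, by simp, by simp⟩
  | lock ν _ ih =>
    obtain ⟨Γ, Δ, rfl, rfl⟩ := ih
    exact ⟨Γ, Δ.lock ν, by simp, by simp⟩

theorem Occurs.of_thinning {q : Md} {Θ Θ' : Cx Md a q} (t : Thinning Θ Θ') :
    ∀ {ℓ : q ⟶ m}, Occurs μ φ Θ ℓ → Occurs μ φ Θ' ℓ := by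
  induction t with
  | refl => exact id
  | drop ν ψ _ ih => exact fun h => .ext ν ψ (ih h)
  | keep ν ψ _ ih =>
    intro ℓ h
    cases h with
    | here => exact .here _
    | ext _ _ h => exact .ext ν ψ (ih h)
  | lock ν _ ih =>
    intro ℓ h
    cases h with
    | lock _ h => exact .lock ν (ih h)

theorem thinning_append_ext (Γ : Cx Md a m) (μ : n ⟶ m) (φ : Fm Md n) {q : Md}
    (Δ : Cx Md m q) : Thinning (Γ.append Δ) ((Γ.ext μ φ).append Δ) := by
  induction Δ with
  | nil => simpa using .drop μ φ (.refl Γ)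
  | ext Δ ν ψ ih => simpa using ih.keep ν ψ
  | lock Δ ν ih => simpa using ih.lock ν

end Cx

open Cx

theorem CxEq.occurs_iff [Bicategory.Strict Md] {a m n q : Md} {μ : n ⟶ m} {φ : Fm Md n}
    {Θ Θ' : Cx Md a q} (e : CxEq Θ Θ') :
    ∀ {ℓ : q ⟶ m}, Occurs μ φ Θ ℓ ↔ Occurs μ φ Θ' ℓ := by
  induction e with
  | refl => exact Iff.rfl
  | symm _ ih => exact ih.symm
  | trans _ _ ih₁ ih₂ => exact ih₁.trans ih₂
  | ext ν ψ _ ih =>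
    intro ℓ
    constructor
    · intro h
      cases h with
      | here => exact .here _
      | ext _ _ h => exact .ext ν ψ (ih.1 h)
    · intro h
      cases h with
      | here => exact .here _
      | ext _ _ h => exact .ext ν ψ (ih.2 h)
  | lock ν _ ih =>
    intro ℓ
    constructor
    · intro h
      cases h with
      | lock _ h => exact .lock ν (ih.1 h)
    · intro h
      cases h with
      | lock _ h => exact .lock ν (ih.2 h)
  | lock_id Γ =>
    intro ℓ
    constructor
    · intro h
      cases h with
      | lock _ h => simpa using h
    · intro h
      simpa using h.lock (𝟙 _)
  | lock_comp Γ μ' ν' =>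
    intro ℓ
    constructor
    · intro h
      cases h with
      | lock _ h => cases h with
        | lock _ h => simpa using h.lock (ν' ≫ μ')
    · intro h
      cases h with
      | lock _ h => simpa using (h.lock μ').lock ν'

theorem Der.thinning_of_cxEq [Bicategory.Strict Md] {a q : Md} {Θ : Cx Md a q} {C : Fm Md q}
    (h : Der Θ C) : ∀ {Θ₁ Θ₂ : Cx Md a q}, CxEq Θ Θ₁ → Thinning Θ₁ Θ₂ → Der Θ₂ C := by
  induction h with
  | var Γ μ φ Δ α =>
    intro Θ₁ Θ₂ e t
    have hocc := (e.occurs_iff.1 (occurs_ext_append_locks Γ μ φ Δ)).of_thinning t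
    obtain ⟨Γ', Δ', rfl, hlocks⟩ := hocc.exists_eq_ext_append
    exact .var Γ' μ φ Δ' (α ≫ eqToHom hlocks.symm)
  | truI => exact fun _ _ => .truI _
  | flsE _ ih => exact fun e t => .flsE (ih e t)
  | conjI _ _ ih₁ ih₂ => exact fun e t => .conjI (ih₁ e t) (ih₂ e t)
  | conjE₁ _ ih => exact fun e t => .conjE₁ (ih e t)
  | conjE₂ _ ih => exact fun e t => .conjE₂ (ih e t)
  | disjI₁ _ ih => exact fun e t => .disjI₁ (ih e t)
  | disjI₂ _ ih => exact fun e t => .disjI₂ (ih e t)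
  | disjE _ _ _ ih ih₁ ih₂ =>
    exact fun e t => .disjE (ih e t) (ih₁ (e.ext _ _) (t.keep _ _)) (ih₂ (e.ext _ _) (t.keep _ _))
  | implI _ ih => exact fun e t => .implI (ih (e.ext _ _) (t.keep _ _))
  | implE _ _ ih₁ ih₂ => exact fun e t => .implE (ih₁ e t) (ih₂ (e.lock _) (t.lock _))
  | modI _ ih => exact fun e t => .modI (ih (e.lock _) (t.lock _))
  | modE _ _ ih₁ ih₂ =>
    exact fun e t => .modE (ih₁ (e.lock _) (t.lock _)) (ih₂ (e.ext _ _) (t.keep _ _))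
  | conv e' _ ih => exact fun e t => ih (e'.trans e) t

/-- **Weakening** is admissible: if `Γ, φ@μ, Δ` is a well-formed context at
mode `p` (here enforced by the intrinsic typing of contexts) and
`Γ, Δ ⊢ C @ p`, then `Γ, φ@μ, Δ ⊢ C @ p`. -/
theorem Der.weakening {Md : Type u} [Bicategory.{w, v, u} Md] [Bicategory.Strict Md]
    {a m n p : Md} (Γ : Cx Md a m) (μ : n ⟶ m) (φ : Fm Md n) (Δ : Cx Md m p)
    (C : Fm Md p) (h : Der (Γ.append Δ) C) :
    Der ((Γ.ext μ φ).append Δ) C :=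
  h.thinning_of_cxEq (.refl _) (thinning_append_ext Γ μ φ Δ)
end

section
/- Lock weakening is admissible in the multimodal natural deduction system: if Γ,🔒_μ, Δ ⊢ φ @ p is derivable and α : μ ⇒ ν is a transformation of the mode theory, then Γ,🔒_ν, Δ ⊢ φ @ p is derivable. -/
/-!
Multimodal intuitionistic logic (MTT's logical fragment), parametrized by a
mode theory, i.e. a strict 2-category `Md`: objects are modes, 1-cells are
modalities, 2-cells are transformations.
-/

open CategoryTheory

universe w v u

variable {Md : Type u} [Bicategory.{w, v, u} Md]

section LockWeakening

variable {Md : Type u} [Bicategory.{w, v, u} Md]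

theorem Cx.append_nil_s2 {a m : Md} (X : Cx Md a m) : X.append .nil = X := by
  rw [Cx.append]

theorem Cx.append_ext_s2 {a m p n' : Md} (X : Cx Md a m) (Y : Cx Md m p) (ρ : n' ⟶ p)
    (ψ : Fm Md n') : X.append (Y.ext ρ ψ) = (X.append Y).ext ρ ψ := by
  rw [Cx.append]

theorem Cx.append_lock_s2 {a m p n' : Md} (X : Cx Md a m) (Y : Cx Md m p) (ρ : n' ⟶ p) :
    X.append (Y.lock ρ) = (X.append Y).lock ρ := by
  rw [Cx.append]

theorem Cx.append_assoc {a m p : Md} (X : Cx Md a m) (Y : Cx Md m p)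
    {q : Md} (Z : Cx Md p q) : (X.append Y).append Z = X.append (Y.append Z) := by
  induction Z with
  | nil => rw [Cx.append_nil_s2, Cx.append_nil_s2]
  | ext Z ρ ψ ih => rw [Cx.append_ext_s2, Cx.append_ext_s2, Cx.append_ext_s2, ih]
  | lock Z ρ ih => rw [Cx.append_lock_s2, Cx.append_lock_s2, Cx.append_lock_s2, ih]

theorem Cx.locks_nil_s2 {m : Md} : (Cx.nil : Cx Md m m).locks = 𝟙 m := by rw [Cx.locks]

theorem Cx.locks_ext_s2 {a m n' : Md} (X : Cx Md a m) (ρ : n' ⟶ m) (ψ : Fm Md n') :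
    (X.ext ρ ψ).locks = X.locks := by rw [Cx.locks]

theorem Cx.locks_lock_s2 {a m n' : Md} (X : Cx Md a m) (ρ : n' ⟶ m) :
    (X.lock ρ).locks = ρ ≫ X.locks := by rw [Cx.locks]

theorem Cx.locks_append [Bicategory.Strict Md] {a m : Md} (X : Cx Md a m)
    {p : Md} (Y : Cx Md m p) : (X.append Y).locks = Y.locks ≫ X.locks := by
  induction Y with
  | nil => rw [Cx.append_nil_s2, Cx.locks_nil_s2, Bicategory.Strict.id_comp]
  | ext Y ρ ψ ih => rw [Cx.append_ext_s2, Cx.locks_ext_s2, Cx.locks_ext_s2, ih]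
  | lock Y ρ ih =>
      rw [Cx.append_lock_s2, Cx.locks_lock_s2, Cx.locks_lock_s2, ih, Bicategory.Strict.assoc]

/-- Positional split of a double decomposition of a context. -/
theorem Cx.split {a n₁ m₁ m n : Md} (Γ₂ : Cx Md a m₁) (μ₁ : n₁ ⟶ m₁) (φ : Fm Md n₁)
    (Γ : Cx Md a m) (μ : n ⟶ m) :
    ∀ {p : Md} (Δ : Cx Md n p) (Δ₂ : Cx Md m₁ p),
      (Γ₂.ext μ₁ φ).append Δ₂ = (Γ.lock μ).append Δ →
      (∃ Γ' : Cx Md n m₁, Γ₂ = (Γ.lock μ).append Γ' ∧ Δ = (Γ'.ext μ₁ φ).append Δ₂) ∨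
      (∃ Δ' : Cx Md m₁ m, Γ = (Γ₂.ext μ₁ φ).append Δ' ∧ Δ₂ = (Δ'.lock μ).append Δ) := by
  intro p Δ
  induction Δ with
  | nil =>
    intro Δ₂ h
    rw [Cx.append_nil_s2] at h
    cases Δ₂ with
    | nil => rw [Cx.append_nil_s2] at h; exact absurd h (by simp)
    | ext E ρ ψ => rw [Cx.append_ext_s2] at h; exact absurd h (by simp)
    | lock E ρ =>
      rw [Cx.append_lock_s2] at h
      injection h with h1 h2 h3 h4
      subst h2
      have h3 := eq_of_heq h3
      have h4 := eq_of_heq h4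
      subst h4
      exact Or.inr ⟨E, h3.symm, (Cx.append_nil_s2 _).symm⟩
  | ext D ρ ψ ih =>
    intro Δ₂ h
    rw [Cx.append_ext_s2] at h
    cases Δ₂ with
    | nil =>
      rw [Cx.append_nil_s2] at h
      injection h with h1 h2 h3 h4 h5
      subst h1
      have h4 := eq_of_heq h4
      have h5 := eq_of_heq h5
      subst h4; subst h5
      exact Or.inl ⟨D, h3, (Cx.append_nil_s2 _).symm⟩
    | ext E ρ' ψ' =>
      rw [Cx.append_ext_s2] at h
      injection h with h1 h2 h3 h4 h5
      subst h1
      have h4 := eq_of_heq h4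
      have h5 := eq_of_heq h5
      subst h4; subst h5
      rcases ih E h3 with ⟨Γ', hΓ, hD⟩ | ⟨Δ', hΓ, hE⟩
      · exact Or.inl ⟨Γ', hΓ, by rw [hD, Cx.append_ext_s2]⟩
      · exact Or.inr ⟨Δ', hΓ, by rw [hE, Cx.append_ext_s2]⟩
    | lock E ρ' => rw [Cx.append_lock_s2] at h; exact absurd h (by simp)
  | lock D ρ ih =>
    intro Δ₂ h
    rw [Cx.append_lock_s2] at h
    cases Δ₂ with
    | nil => rw [Cx.append_nil_s2] at h; exact absurd h (by simp)
    | ext E ρ' ψ' => rw [Cx.append_ext_s2] at h; exact absurd h (by simp)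
    | lock E ρ' =>
      rw [Cx.append_lock_s2] at h
      injection h with h1 h2 h3 h4
      subst h2
      have h3 := eq_of_heq h3
      have h4 := eq_of_heq h4
      subst h4
      rcases ih E h3 with ⟨Γ', hΓ, hD⟩ | ⟨Δ', hΓ, hE⟩
      · exact Or.inl ⟨Γ', hΓ, by rw [hD, Cx.append_lock_s2]⟩
      · exact Or.inr ⟨Δ', hΓ, by rw [hE, Cx.append_lock_s2]⟩

/-- `Splits X Y` : every ext-decomposition of `X` transfers to one of `Y`
with the same composite of trailing locks. -/
def Splits {a q : Md} (X Y : Cx Md a q) : Prop :=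
  ∀ {n₁ m₁ : Md} (Γ₁ : Cx Md a m₁) (μ₁ : n₁ ⟶ m₁) (φ : Fm Md n₁) (Δ₁ : Cx Md m₁ q),
    X = (Γ₁.ext μ₁ φ).append Δ₁ →
    ∃ (Γ₂ : Cx Md a m₁) (Δ₂ : Cx Md m₁ q),
      Y = (Γ₂.ext μ₁ φ).append Δ₂ ∧ Δ₂.locks = Δ₁.locks

theorem Splits.refl {a q : Md} (X : Cx Md a q) : Splits X X :=
  fun _ _ _ _ h => ⟨_, _, h, rfl⟩

theorem Splits.trans {a q : Md} {X Y Z : Cx Md a q} (h1 : Splits X Y) (h2 : Splits Y Z) :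
    Splits X Z := by
  intro n₁ m₁ Γ₁ μ₁ φ Δ₁ hX
  obtain ⟨Γ₂, Δ₂, hY, hl⟩ := h1 Γ₁ μ₁ φ Δ₁ hX
  obtain ⟨Γ₃, Δ₃, hZ, hl'⟩ := h2 Γ₂ μ₁ φ Δ₂ hY
  exact ⟨Γ₃, Δ₃, hZ, hl'.trans hl⟩

theorem Splits.ext {a q n' : Md} {X Y : Cx Md a q} (h : Splits X Y) (ρ : n' ⟶ q)
    (ψ : Fm Md n') : Splits (X.ext ρ ψ) (Y.ext ρ ψ) := by
  intro n₁ m₁ Γ₁ μ₁ φ Δ₁ hX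
  cases Δ₁ with
  | nil =>
    rw [Cx.append_nil_s2] at hX
    injection hX with h1 h2 h3 h4 h5
    subst h1
    have h4 := eq_of_heq h4
    have h5 := eq_of_heq h5
    subst h4; subst h5; subst h3
    exact ⟨Y, .nil, (Cx.append_nil_s2 _).symm, rfl⟩
  | ext E ρ' ψ' =>
    rw [Cx.append_ext_s2] at hX
    injection hX with h1 h2 h3 h4 h5
    subst h1
    have h4 := eq_of_heq h4
    have h5 := eq_of_heq h5
    subst h4; subst h5
    obtain ⟨Γ₂, Δ₂, hY, hl⟩ := h Γ₁ μ₁ φ E h3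
    exact ⟨Γ₂, Δ₂.ext ρ ψ, by rw [Cx.append_ext_s2, hY], by rw [Cx.locks_ext_s2, Cx.locks_ext_s2, hl]⟩
  | lock E ρ' => rw [Cx.append_lock_s2] at hX; exact absurd hX (by simp)

theorem Splits.lock {a q n' : Md} {X Y : Cx Md a q} (h : Splits X Y) (ρ : n' ⟶ q) :
    Splits (X.lock ρ) (Y.lock ρ) := by
  intro n₁ m₁ Γ₁ μ₁ φ Δ₁ hX
  cases Δ₁ with
  | nil => rw [Cx.append_nil_s2] at hX; exact absurd hX (by simp)
  | ext E ρ' ψ' => rw [Cx.append_ext_s2] at hX; exact absurd hX (by simp)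
  | lock E ρ' =>
    rw [Cx.append_lock_s2] at hX
    injection hX with h1 h2 h3 h4
    subst h2
    have h3 := eq_of_heq h3
    have h4 := eq_of_heq h4
    subst h4
    obtain ⟨Γ₂, Δ₂, hY, hl⟩ := h Γ₁ μ₁ φ E h3
    exact ⟨Γ₂, Δ₂.lock ρ, by rw [Cx.append_lock_s2, hY],
      by rw [Cx.locks_lock_s2, Cx.locks_lock_s2, hl]⟩

theorem CxEq.splits [Bicategory.Strict Md] {a q : Md} {X Y : Cx Md a q} (h : CxEq X Y) :
    Splits X Y ∧ Splits Y X := by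
  induction h with
  | refl Γ => exact ⟨Splits.refl Γ, Splits.refl Γ⟩
  | symm _ ih => exact ⟨ih.2, ih.1⟩
  | trans _ _ ih1 ih2 => exact ⟨Splits.trans ih1.1 ih2.1, Splits.trans ih2.2 ih1.2⟩
  | ext ρ ψ _ ih => exact ⟨Splits.ext ih.1 ρ ψ, Splits.ext ih.2 ρ ψ⟩
  | lock ρ _ ih => exact ⟨Splits.lock ih.1 ρ, Splits.lock ih.2 ρ⟩
  | lock_id Γ =>
    constructor
    · intro n₁ m₁ Γ₁ μ₁ φ Δ₁ hX
      cases Δ₁ with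
      | nil => rw [Cx.append_nil_s2] at hX; exact absurd hX (by simp)
      | ext E ρ' ψ' => rw [Cx.append_ext_s2] at hX; exact absurd hX (by simp)
      | lock E ρ' =>
        rw [Cx.append_lock_s2] at hX
        injection hX with h1 h2 h3 h4
        subst h2
        have h3 := eq_of_heq h3
        have h4 := eq_of_heq h4
        subst h4
        exact ⟨Γ₁, E, h3,
          by rw [Cx.locks_lock_s2, Bicategory.Strict.id_comp]⟩
    · intro n₁ m₁ Γ₁ μ₁ φ Δ₁ hX
      exact ⟨Γ₁, Δ₁.lock (𝟙 _), by rw [Cx.append_lock_s2, hX],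
        by rw [Cx.locks_lock_s2, Bicategory.Strict.id_comp]⟩
  | lock_comp Γ ρ σ =>
    constructor
    · intro n₁ m₁ Γ₁ μ₁ φ Δ₁ hX
      cases Δ₁ with
      | nil => rw [Cx.append_nil_s2] at hX; exact absurd hX (by simp)
      | ext E ρ' ψ' => rw [Cx.append_ext_s2] at hX; exact absurd hX (by simp)
      | lock E ρ' =>
        rw [Cx.append_lock_s2] at hX
        injection hX with h1 h2 h3 h4
        subst h2
        have h3 := eq_of_heq h3
        have h4 := eq_of_heq h4
        subst h4
        cases E with
        | nil => rw [Cx.append_nil_s2] at h3; exact absurd h3 (by simp)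
        | ext F ρ'' ψ'' => rw [Cx.append_ext_s2] at h3; exact absurd h3 (by simp)
        | lock F ρ'' =>
          rw [Cx.append_lock_s2] at h3
          injection h3 with g1 g2 g3 g4
          subst g2
          have g3 := eq_of_heq g3
          have g4 := eq_of_heq g4
          subst g4
          exact ⟨Γ₁, F.lock (σ ≫ ρ), by rw [Cx.append_lock_s2, g3],
            by rw [Cx.locks_lock_s2, Cx.locks_lock_s2, Cx.locks_lock_s2,
              Bicategory.Strict.assoc]⟩
    · intro n₁ m₁ Γ₁ μ₁ φ Δ₁ hX
      cases Δ₁ with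
      | nil => rw [Cx.append_nil_s2] at hX; exact absurd hX (by simp)
      | ext E ρ' ψ' => rw [Cx.append_ext_s2] at hX; exact absurd hX (by simp)
      | lock E ρ' =>
        rw [Cx.append_lock_s2] at hX
        injection hX with h1 h2 h3 h4
        subst h2
        have h3 := eq_of_heq h3
        have h4 := eq_of_heq h4
        subst h4
        exact ⟨Γ₁, (E.lock ρ).lock σ, by rw [Cx.append_lock_s2, Cx.append_lock_s2, h3],
          by rw [Cx.locks_lock_s2, Cx.locks_lock_s2, Cx.locks_lock_s2, Bicategory.Strict.assoc]⟩

theorem Der.lock_weak_aux [Bicategory.Strict Md]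
    {a q : Md} {Θ : Cx Md a q} {φ : Fm Md q} (h : Der Θ φ) :
    ∀ {m n : Md} (Γ : Cx Md a m) {μ ν : n ⟶ m} (α : μ ⟶ ν) (Δ : Cx Md n q),
      CxEq Θ ((Γ.lock μ).append Δ) → Der ((Γ.lock ν).append Δ) φ := by
  induction h with
  | var Γ₁ μ₁ φ₀ Δ₁ α₁ =>
    intro m n Γ μ ν α Δ hc
    obtain ⟨Γ₂, Δ₂, hY, hl⟩ := (CxEq.splits hc).1 Γ₁ μ₁ φ₀ Δ₁ rfl
    rcases Cx.split Γ₂ μ₁ φ₀ Γ μ Δ Δ₂ hY.symm with ⟨Γ', hΓ₂, hΔ⟩ | ⟨Δ', hΓ, hΔ₂⟩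
    · subst hΔ
      rw [← Cx.append_assoc, Cx.append_ext_s2]
      exact Der.var ((Γ.lock ν).append Γ') μ₁ φ₀ Δ₂ (α₁ ≫ eqToHom hl.symm)
    · subst hΓ
      have key := Der.var Γ₂ μ₁ φ₀ ((Δ'.lock ν).append Δ)
        (α₁ ≫ eqToHom (by rw [← hl, hΔ₂, Cx.locks_append, Cx.locks_lock_s2]) ≫
          Bicategory.whiskerLeft Δ.locks (Bicategory.whiskerRight α Δ'.locks) ≫
          eqToHom (by rw [Cx.locks_append, Cx.locks_lock_s2]))
      rw [← Cx.append_assoc, Cx.append_lock_s2] at key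
      exact key
  | truI Γ₀ => intro m n Γ μ ν α Δ hc; exact Der.truI _
  | flsE _ ih => intro m n Γ μ ν α Δ hc; exact (ih Γ α Δ hc).flsE
  | conjI _ _ ih1 ih2 =>
    intro m n Γ μ ν α Δ hc; exact (ih1 Γ α Δ hc).conjI (ih2 Γ α Δ hc)
  | conjE₁ _ ih => intro m n Γ μ ν α Δ hc; exact (ih Γ α Δ hc).conjE₁
  | conjE₂ _ ih => intro m n Γ μ ν α Δ hc; exact (ih Γ α Δ hc).conjE₂
  | disjI₁ _ ih => intro m n Γ μ ν α Δ hc; exact (ih Γ α Δ hc).disjI₁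
  | disjI₂ _ ih => intro m n Γ μ ν α Δ hc; exact (ih Γ α Δ hc).disjI₂
  | disjE _ _ _ ih ih1 ih2 =>
    intro m n Γ μ ν α Δ hc
    refine Der.disjE (ih Γ α Δ hc) ?_ ?_
    · have := ih1 Γ α (Δ.ext (𝟙 _) _) (by rw [Cx.append_ext_s2]; exact hc.ext _ _)
      rwa [Cx.append_ext_s2] at this
    · have := ih2 Γ α (Δ.ext (𝟙 _) _) (by rw [Cx.append_ext_s2]; exact hc.ext _ _)
      rwa [Cx.append_ext_s2] at this
  | implI _ ih =>
    intro m n Γ μ ν α Δ hc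
    refine Der.implI ?_
    have := ih Γ α (Δ.ext _ _) (by rw [Cx.append_ext_s2]; exact hc.ext _ _)
    rwa [Cx.append_ext_s2] at this
  | implE _ _ ih1 ih2 =>
    intro m n Γ μ ν α Δ hc
    refine Der.implE (ih1 Γ α Δ hc) ?_
    have := ih2 Γ α (Δ.lock _) (by rw [Cx.append_lock_s2]; exact hc.lock _)
    rwa [Cx.append_lock_s2] at this
  | modI _ ih =>
    intro m n Γ μ ν α Δ hc
    refine Der.modI ?_
    have := ih Γ α (Δ.lock _) (by rw [Cx.append_lock_s2]; exact hc.lock _)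
    rwa [Cx.append_lock_s2] at this
  | modE _ _ ih1 ih2 =>
    intro m n Γ μ ν α Δ hc
    have p1 := ih1 Γ α (Δ.lock _) (by rw [Cx.append_lock_s2]; exact hc.lock _)
    have p2 := ih2 Γ α (Δ.ext _ _) (by rw [Cx.append_ext_s2]; exact hc.ext _ _)
    rw [Cx.append_lock_s2] at p1
    rw [Cx.append_ext_s2] at p2
    exact Der.modE p1 p2
  | conv hcc _ ih =>
    intro m n Γ μ ν α Δ hc
    exact ih Γ α Δ (hcc.trans hc)

end LockWeakening

/-- **Lock weakening** is admissible: if `Γ,🔒_μ, Δ ⊢ φ @ p` and `α : μ ⇒ ν`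
is a transformation of the mode theory, then `Γ,🔒_ν, Δ ⊢ φ @ p`. -/
theorem Der.lock_weakening {Md : Type u} [Bicategory.{w, v, u} Md] [Bicategory.Strict Md]
    {a m n p : Md} (Γ : Cx Md a m) {μ ν : n ⟶ m} (α : μ ⟶ ν) (Δ : Cx Md n p)
    (φ : Fm Md p) (h : Der ((Γ.lock μ).append Δ) φ) :
    Der ((Γ.lock ν).append Δ) φ :=
  Der.lock_weak_aux h Γ α Δ (CxEq.refl _)
end

section
/- The modal cut rule is admissible in the multimodal natural deduction system: if Γ,🔒_μ ⊢ φ @ n is derivable and Γ, φ@μ, Δ ⊢ ψ @ b is derivable, then Γ, Δ ⊢ ψ @ b is derivable. -/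
/-!
Multimodal intuitionistic logic (MTT's logical fragment), parametrized by a
mode theory, i.e. a strict 2-category `Md`: objects are modes, 1-cells are
modalities, 2-cells are transformations.
-/

open CategoryTheory

universe w v u

variable {Md : Type u} [Bicategory.{w, v, u} Md]

section CutAdmissible
variable {Md : Type u} [Bicategory.{w, v, u} Md]

attribute [local simp] Cx.append Cx.locks

namespace Cx

theorem append_nil_s3 {a m : Md} (C : Cx Md a m) : C.append Cx.nil = C := by simp

theorem nil_append : ∀ {m b : Md} (Θ : Cx Md m b), (Cx.nil).append Θ = Θ
  | _, _, .nil => by simp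
  | _, _, .ext Θ μ φ => by simp [nil_append Θ]
  | _, _, .lock Θ μ => by simp [nil_append Θ]

theorem append_assoc_s3 : ∀ {a m p q : Md} (C : Cx Md a m) (D : Cx Md m p) (E : Cx Md p q),
    (C.append D).append E = C.append (D.append E)
  | _, _, _, _, _, _, .nil => by simp
  | _, _, _, _, C, D, .ext E μ φ => by simp [append_assoc_s3 C D E]
  | _, _, _, _, C, D, .lock E μ => by simp [append_assoc_s3 C D E]

theorem locks_append_s3 [Bicategory.Strict Md] : ∀ {a m b : Md} (C : Cx Md a m) (D : Cx Md m b),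
    (C.append D).locks = D.locks ≫ C.locks
  | _, _, _, C, .nil => by simp [Bicategory.Strict.id_comp]
  | _, _, _, C, .ext D μ φ => by simp [locks_append_s3 C D]
  | _, _, _, C, .lock D μ => by simp [locks_append_s3 C D, Bicategory.Strict.assoc]

end Cx

theorem CxEq.locks_eq [Bicategory.Strict Md] {a m : Md} {C D : Cx Md a m} (h : CxEq C D) :
    C.locks = D.locks := by
  induction h with
  | refl => rfl
  | symm _ ih => exact ih.symm
  | trans _ _ ih₁ ih₂ => exact ih₁.trans ih₂
  | ext μ φ _ ih => simpa using ih
  | lock μ _ ih => simp [ih]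
  | lock_id Γ => simp [Bicategory.Strict.id_comp]
  | lock_comp Γ μ ν => simp [Bicategory.Strict.assoc]

theorem CxEq.append_right {a m : Md} {C D : Cx Md a m} (h : CxEq C D) :
    ∀ {b : Md} (Θ : Cx Md m b), CxEq (C.append Θ) (D.append Θ)
  | _, .nil => by simpa using h
  | _, .ext Θ μ φ => by simpa using CxEq.ext μ φ (h.append_right Θ)
  | _, .lock Θ μ => by simpa using CxEq.lock μ (h.append_right Θ)

/-- Syntactic splitting of a decomposition of an appended context at a variable. -/
theorem Cx.split_s3 : ∀ {m b : Md} (Θ : Cx Md m b) {a n₁ m₁ : Md} (X : Cx Md a m)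
    (Γ' : Cx Md a m₁) (μ' : n₁ ⟶ m₁) (φ' : Fm Md n₁) (Δ' : Cx Md m₁ b),
    X.append Θ = (Γ'.ext μ' φ').append Δ' →
    (∃ Θ₀ : Cx Md m m₁, Γ' = X.append Θ₀ ∧ Θ = (Θ₀.ext μ' φ').append Δ') ∨
    (∃ Δ₀ : Cx Md m₁ m, X = (Γ'.ext μ' φ').append Δ₀ ∧ Δ' = Δ₀.append Θ) := by
  intro m b Θ
  induction Θ with
  | nil =>
    intro a n₁ m₁ X Γ' μ' φ' Δ' h
    simp only [Cx.append] at h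
    exact Or.inr ⟨Δ', h, by simp⟩
  | ext Θ ρ χ ih =>
    intro a n₁ m₁ X Γ' μ' φ' Δ' h
    cases Δ' with
    | nil =>
      simp only [Cx.append] at h
      injection h with h1 h2 h3 h4 h5
      subst h1
      cases h4; cases h5
      exact Or.inl ⟨Θ, h3.symm, by simp⟩
    | ext Δ'' ρ' χ' =>
      simp only [Cx.append] at h
      injection h with h1 h2 h3 h4 h5
      subst h1
      cases h4; cases h5
      rcases ih X Γ' μ' φ' Δ'' h3 with ⟨Θ₀, e1, e2⟩ | ⟨Δ₀, e1, e2⟩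
      · exact Or.inl ⟨Θ₀, e1, by simp [e2]⟩
      · exact Or.inr ⟨Δ₀, e1, by simp [e2]⟩
    | lock Δ'' ρ' =>
      simp only [Cx.append] at h
      injection h
  | lock Θ ρ ih =>
    intro a n₁ m₁ X Γ' μ' φ' Δ' h
    cases Δ' with
    | nil =>
      simp only [Cx.append] at h
      injection h
    | ext Δ'' ρ' χ' =>
      simp only [Cx.append] at h
      injection h
    | lock Δ'' ρ' =>
      simp only [Cx.append] at h
      injection h with h1 h2 h3 h4
      subst h2
      obtain rfl := eq_of_heq h4
      replace h3 := eq_of_heq h3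
      rcases ih X Γ' μ' φ' Δ'' h3 with ⟨Θ₀, e1, e2⟩ | ⟨Δ₀, e1, e2⟩
      · exact Or.inl ⟨Θ₀, e1, by simp [e2]⟩
      · exact Or.inr ⟨Δ₀, e1, by simp [e2]⟩

end CutAdmissible
section CutAdmissible2
variable {Md : Type u} [Bicategory.{w, v, u} Md]

/-- Transferability of variable-decompositions along a context identification. -/
def Tr {a b : Md} (C D : Cx Md a b) : Prop :=
  ∀ {n m : Md} (Γ₁ : Cx Md a m) (μ : n ⟶ m) (φ : Fm Md n) (Δ₁ : Cx Md m b),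
    C = (Γ₁.ext μ φ).append Δ₁ →
    ∃ (Γ₂ : Cx Md a m) (Δ₂ : Cx Md m b),
      D = (Γ₂.ext μ φ).append Δ₂ ∧ CxEq Γ₁ Γ₂ ∧ CxEq Δ₁ Δ₂

theorem CxEq.tr {a b : Md} {C D : Cx Md a b} (h : CxEq C D) : Tr C D ∧ Tr D C := by
  induction h with
  | refl Γ =>
    exact ⟨fun Γ₁ μ φ Δ₁ e => ⟨Γ₁, Δ₁, e, .refl _, .refl _⟩,
           fun Γ₁ μ φ Δ₁ e => ⟨Γ₁, Δ₁, e, .refl _, .refl _⟩⟩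
  | symm _ ih => exact ⟨ih.2, ih.1⟩
  | trans _ _ ih₁ ih₂ =>
    refine ⟨fun Γ₁ μ φ Δ₁ e => ?_, fun Γ₁ μ φ Δ₁ e => ?_⟩
    · obtain ⟨Γ₂, Δ₂, e2, c1, c2⟩ := ih₁.1 Γ₁ μ φ Δ₁ e
      obtain ⟨Γ₃, Δ₃, e3, c3, c4⟩ := ih₂.1 Γ₂ μ φ Δ₂ e2
      exact ⟨Γ₃, Δ₃, e3, c1.trans c3, c2.trans c4⟩
    · obtain ⟨Γ₂, Δ₂, e2, c1, c2⟩ := ih₂.2 Γ₁ μ φ Δ₁ e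
      obtain ⟨Γ₃, Δ₃, e3, c3, c4⟩ := ih₁.2 Γ₂ μ φ Δ₂ e2
      exact ⟨Γ₃, Δ₃, e3, c1.trans c3, c2.trans c4⟩
  | @ext n m Γ Δ ρ χ h ih =>
    have key : ∀ (Γ Δ : Cx Md a m), CxEq Γ Δ → Tr Γ Δ → Tr (Γ.ext ρ χ) (Δ.ext ρ χ) := by
      intro Γ Δ hΓΔ trΓΔ
      intro n₁ m₁ Γ₁ μ φ Δ₁ e
      cases Δ₁ with
      | nil =>
        simp only [Cx.append] at e
        injection e with h1 h2 h3 h4 h5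
        subst h1
        obtain rfl := eq_of_heq h4
        obtain rfl := eq_of_heq h5
        subst h3
        exact ⟨Δ, .nil, by simp [Cx.append], hΓΔ, .refl _⟩
      | ext Δ'' ρ' χ' =>
        simp only [Cx.append] at e
        injection e with h1 h2 h3 h4 h5
        subst h1
        obtain rfl := eq_of_heq h4
        obtain rfl := eq_of_heq h5
        obtain ⟨Γ₂, Δ₂, e2, c1, c2⟩ := trΓΔ Γ₁ μ φ Δ'' h3
        exact ⟨Γ₂, Δ₂.ext ρ χ, by simp [Cx.append, e2], c1, .ext ρ χ c2⟩
      | lock Δ'' ρ' =>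
        simp only [Cx.append] at e
        injection e
    exact ⟨key Γ Δ h ih.1, key Δ Γ h.symm ih.2⟩
  | @lock n m Γ Δ ρ h ih =>
    have key : ∀ (Γ Δ : Cx Md a m), CxEq Γ Δ → Tr Γ Δ → Tr (Γ.lock ρ) (Δ.lock ρ) := by
      intro Γ Δ hΓΔ trΓΔ
      intro n₁ m₁ Γ₁ μ φ Δ₁ e
      cases Δ₁ with
      | nil =>
        simp only [Cx.append] at e
        injection e
      | ext Δ'' ρ' χ' =>
        simp only [Cx.append] at e
        injection e
      | lock Δ'' ρ' =>
        simp only [Cx.append] at e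
        injection e with h1 h2 h3 h4
        subst h2
        obtain rfl := eq_of_heq h4
        replace h3 := eq_of_heq h3
        obtain ⟨Γ₂, Δ₂, e2, c1, c2⟩ := trΓΔ Γ₁ μ φ Δ'' h3
        exact ⟨Γ₂, Δ₂.lock ρ, by simp [Cx.append, e2], c1, .lock ρ c2⟩
    exact ⟨key Γ Δ h ih.1, key Δ Γ h.symm ih.2⟩
  | lock_id Γ =>
    refine ⟨fun Γ₁ μ φ Δ₁ e => ?_, fun Γ₁ μ φ Δ₁ e => ?_⟩
    · cases Δ₁ with
      | nil => simp only [Cx.append] at e; injection e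
      | ext Δ'' ρ' χ' => simp only [Cx.append] at e; injection e
      | lock Δ'' ρ' =>
        simp only [Cx.append] at e
        injection e with h1 h2 h3 h4
        subst h2
        obtain rfl := eq_of_heq h4
        replace h3 := eq_of_heq h3
        exact ⟨Γ₁, Δ'', h3, .refl _, .lock_id _⟩
    · exact ⟨Γ₁, Δ₁.lock (𝟙 _), by simp [Cx.append, e], .refl _, .symm (.lock_id _)⟩
  | @lock_comp o n m Γ ρ ν =>
    refine ⟨fun Γ₁ μ φ Δ₁ e => ?_, fun Γ₁ μ φ Δ₁ e => ?_⟩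
    · cases Δ₁ with
      | nil => simp only [Cx.append] at e; injection e
      | ext Δ'' ρ' χ' => simp only [Cx.append] at e; injection e
      | lock Δ'' ρ' =>
        simp only [Cx.append] at e
        injection e with h1 h2 h3 h4
        subst h2
        obtain rfl := eq_of_heq h4
        replace h3 := eq_of_heq h3
        cases Δ'' with
        | nil => simp only [Cx.append] at h3; injection h3
        | ext Δ''' ρ'' χ'' => simp only [Cx.append] at h3; injection h3
        | lock Δ''' ρ'' =>
          simp only [Cx.append] at h3
          injection h3 with g1 g2 g3 g4
          subst g2
          obtain rfl := eq_of_heq g4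
          replace g3 := eq_of_heq g3
          exact ⟨Γ₁, Δ'''.lock (ν ≫ ρ), by simp [Cx.append, g3], .refl _, .lock_comp _ _ _⟩
    · cases Δ₁ with
      | nil => simp only [Cx.append] at e; injection e
      | ext Δ'' ρ' χ' => simp only [Cx.append] at e; injection e
      | lock Δ'' ρ' =>
        simp only [Cx.append] at e
        injection e with h1 h2 h3 h4
        subst h2
        obtain rfl := eq_of_heq h4
        replace h3 := eq_of_heq h3
        exact ⟨Γ₁, (Δ''.lock ρ).lock ν, by simp [Cx.append, h3], .refl _,
          .symm (.lock_comp _ _ _)⟩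

end CutAdmissible2
section CutAdmissible3
variable {Md : Type u} [Bicategory.{w, v, u} Md]

/-- Generic structural induction over derivations, relative to an abstract
relation `R` on contexts that is closed under extension, locks, and
left conversion, and that validates the variable rule. -/
theorem Der.gen (R : ∀ {a b : Md}, Cx Md a b → Cx Md a b → Prop)
    (hext : ∀ {a b n : Md} {C C' : Cx Md a b} (ρ : n ⟶ b) (χ : Fm Md n),
      R C C' → R (C.ext ρ χ) (C'.ext ρ χ))
    (hlock : ∀ {a b n : Md} {C C' : Cx Md a b} (ρ : n ⟶ b),
      R C C' → R (C.lock ρ) (C'.lock ρ))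
    (hconv : ∀ {a b : Md} {C D C' : Cx Md a b}, CxEq C D → R D C' → R C C')
    (hvar : ∀ {a m n : Md} (Γ' : Cx Md a m) (μ : n ⟶ m) (φ : Fm Md n)
      (Δ : Cx Md m n) (α : μ ⟶ Δ.locks) (C' : Cx Md a n),
      R ((Γ'.ext μ φ).append Δ) C' → Der C' φ) :
    ∀ {a b : Md} {C : Cx Md a b} {ψ : Fm Md b}, Der C ψ →
      ∀ {C' : Cx Md a b}, R C C' → Der C' ψ := by
  intro a b C ψ h
  induction h with
  | var Γ μ φ Δ α => exact fun hR => hvar Γ μ φ Δ α _ hR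
  | truI Γ => exact fun _ => Der.truI _
  | flsE _ ih => exact fun hR => Der.flsE (ih hR)
  | conjI _ _ ih₁ ih₂ => exact fun hR => Der.conjI (ih₁ hR) (ih₂ hR)
  | conjE₁ _ ih => exact fun hR => Der.conjE₁ (ih hR)
  | conjE₂ _ ih => exact fun hR => Der.conjE₂ (ih hR)
  | disjI₁ _ ih => exact fun hR => Der.disjI₁ (ih hR)
  | disjI₂ _ ih => exact fun hR => Der.disjI₂ (ih hR)
  | disjE _ _ _ ih₁ ih₂ ih₃ =>
    exact fun hR => Der.disjE (ih₁ hR) (ih₂ (hext _ _ hR)) (ih₃ (hext _ _ hR))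
  | implI _ ih => exact fun hR => Der.implI (ih (hext _ _ hR))
  | implE _ _ ih₁ ih₂ => exact fun hR => Der.implE (ih₁ hR) (ih₂ (hlock _ hR))
  | modI _ ih => exact fun hR => Der.modI (ih (hlock _ hR))
  | modE _ _ ih₁ ih₂ => exact fun hR => Der.modE (ih₁ (hlock _ hR)) (ih₂ (hext _ _ hR))
  | conv hEq _ ih => exact fun hR => ih (hconv hEq hR)

end CutAdmissible3
section CutAdmissible4
variable {Md : Type u} [Bicategory.{w, v, u} Md] [Bicategory.Strict Md]

/-- The weakening relation. -/
def WkRel {a b : Md} (C C' : Cx Md a b) : Prop :=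
  ∃ (m k : Md) (X : Cx Md a m) (σ : k ⟶ m) (ξ : Fm Md k) (Θ : Cx Md m b),
    CxEq C (X.append Θ) ∧ CxEq C' ((X.ext σ ξ).append Θ)

/-- Weakening is admissible. -/
theorem Der.weak {a m k b : Md} (X : Cx Md a m) (σ : k ⟶ m) (ξ : Fm Md k)
    (Θ : Cx Md m b) {ψ : Fm Md b} (h : Der (X.append Θ) ψ) :
    Der ((X.ext σ ξ).append Θ) ψ := by
  refine Der.gen (fun {a b} C C' => WkRel C C') ?hext ?hlock ?hconv ?hvar h
    ⟨m, k, X, σ, ξ, Θ, .refl _, .refl _⟩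
  case hext =>
    rintro a b n C C' ρ χ ⟨m, k, X, σ, ξ, Θ, c1, c2⟩
    exact ⟨m, k, X, σ, ξ, Θ.ext ρ χ, by simpa [Cx.append] using CxEq.ext ρ χ c1,
      by simpa [Cx.append] using CxEq.ext ρ χ c2⟩
  case hlock =>
    rintro a b n C C' ρ ⟨m, k, X, σ, ξ, Θ, c1, c2⟩
    exact ⟨m, k, X, σ, ξ, Θ.lock ρ, by simpa [Cx.append] using CxEq.lock ρ c1,
      by simpa [Cx.append] using CxEq.lock ρ c2⟩
  case hconv =>
    rintro a b C D C' hCD ⟨m, k, X, σ, ξ, Θ, c1, c2⟩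
    exact ⟨m, k, X, σ, ξ, Θ, hCD.trans c1, c2⟩
  case hvar =>
    rintro a m' n Γ' μ φ Δ α C' ⟨m, k, X, σ, ξ, Θ, c1, c2⟩
    obtain ⟨Γ₂, Δ₂, e2, d1, d2⟩ := c1.tr.1 Γ' μ φ Δ rfl
    have hl : μ ⟶ Δ₂.locks := d2.locks_eq ▸ α
    refine Der.conv c2.symm ?_
    rcases Cx.split_s3 Θ X Γ₂ μ φ Δ₂ e2 with ⟨Θ₀, e3, e4⟩ | ⟨Δ₀, e3, e4⟩
    · have goal : ((X.ext σ ξ).append Θ) =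
          ((((X.ext σ ξ).append Θ₀)).ext μ φ).append Δ₂ := by
        rw [e4]
        rw [show (Θ₀.ext μ φ) = Θ₀.append (Cx.nil.ext μ φ) by simp [Cx.append],
          ← Cx.append_assoc_s3, ← Cx.append_assoc_s3]
        simp [Cx.append]
      rw [goal]
      exact Der.var _ μ φ Δ₂ hl
    · have goal : ((X.ext σ ξ).append Θ) =
          (Γ₂.ext μ φ).append ((Δ₀.ext σ ξ).append Θ) := by
        rw [e3, ← Cx.append_assoc_s3]
        simp [Cx.append]
      have hl2 : μ ⟶ ((Δ₀.ext σ ξ).append Θ).locks := by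
        have : ((Δ₀.ext σ ξ).append Θ).locks = Δ₂.locks := by
          rw [e4, Cx.locks_append_s3, Cx.locks_append_s3]
          simp [Cx.locks]
        exact this ▸ hl
      rw [goal]
      exact Der.var _ μ φ _ hl2

end CutAdmissible4
section CutAdmissible5
variable {Md : Type u} [Bicategory.{w, v, u} Md] [Bicategory.Strict Md]

/-- The 2-cell action relation on locks. -/
def KeyRel {a b : Md} (C C' : Cx Md a b) : Prop :=
  ∃ (m n : Md) (Γ : Cx Md a m) (ν ν' : n ⟶ m) (_ : ν ⟶ ν') (Θ : Cx Md n b),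
    CxEq C ((Γ.lock ν).append Θ) ∧ CxEq C' ((Γ.lock ν').append Θ)

/-- 2-cells act contravariantly on locks. -/
theorem Der.key {a m n b : Md} (Γ : Cx Md a m) {ν ν' : n ⟶ m} (β : ν ⟶ ν')
    (Θ : Cx Md n b) {ψ : Fm Md b} (h : Der ((Γ.lock ν).append Θ) ψ) :
    Der ((Γ.lock ν').append Θ) ψ := by
  refine Der.gen (fun {a b} C C' => KeyRel C C') ?hext ?hlock ?hconv ?hvar h
    ⟨m, n, Γ, ν, ν', β, Θ, .refl _, .refl _⟩
  case hext =>
    rintro a b k C C' ρ χ ⟨m, n, Γ, ν, ν', β, Θ, c1, c2⟩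
    exact ⟨m, n, Γ, ν, ν', β, Θ.ext ρ χ, by simpa [Cx.append] using CxEq.ext ρ χ c1,
      by simpa [Cx.append] using CxEq.ext ρ χ c2⟩
  case hlock =>
    rintro a b k C C' ρ ⟨m, n, Γ, ν, ν', β, Θ, c1, c2⟩
    exact ⟨m, n, Γ, ν, ν', β, Θ.lock ρ, by simpa [Cx.append] using CxEq.lock ρ c1,
      by simpa [Cx.append] using CxEq.lock ρ c2⟩
  case hconv =>
    rintro a b C D C' hCD ⟨m, n, Γ, ν, ν', β, Θ, c1, c2⟩
    exact ⟨m, n, Γ, ν, ν', β, Θ, hCD.trans c1, c2⟩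
  case hvar =>
    rintro a m' k Γ' μ φ Δ α C' ⟨m, n, Γ₀, ν, ν', β, Θ, c1, c2⟩
    obtain ⟨Γ₂, Δ₂, e2, d1, d2⟩ := c1.tr.1 Γ' μ φ Δ rfl
    have hl : μ ⟶ Δ₂.locks := d2.locks_eq ▸ α
    refine Der.conv c2.symm ?_
    rcases Cx.split_s3 Θ (Γ₀.lock ν) Γ₂ μ φ Δ₂ e2 with ⟨Θ₀, e3, e4⟩ | ⟨Δ₀, e3, e4⟩
    · have goal : ((Γ₀.lock ν').append Θ) =
          ((((Γ₀.lock ν').append Θ₀)).ext μ φ).append Δ₂ := by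
        rw [e4]
        rw [show (Θ₀.ext μ φ) = Θ₀.append (Cx.nil.ext μ φ) by simp [Cx.append],
          ← Cx.append_assoc_s3, ← Cx.append_assoc_s3]
        simp [Cx.append]
      rw [goal]
      exact Der.var _ μ φ Δ₂ hl
    · cases Δ₀ with
      | nil => simp only [Cx.append] at e3; injection e3
      | ext Δ₀₀ ρ χ => simp only [Cx.append] at e3; injection e3
      | lock Δ₀₀ ρ =>
        simp only [Cx.append] at e3
        injection e3 with h1 h2 h3 h4
        subst h2
        obtain rfl := eq_of_heq h4
        replace h3 := eq_of_heq h3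
        have goal : ((Γ₀.lock ν').append Θ) =
            (Γ₂.ext μ φ).append ((Δ₀₀.lock ν').append Θ) := by
          rw [h3, ← Cx.append_assoc_s3]
          simp [Cx.append]
        have hl2 : μ ⟶ ((Δ₀₀.lock ν').append Θ).locks := by
          have h5 : Δ₂.locks = Θ.locks ≫ (ν ≫ Δ₀₀.locks) := by
            rw [e4, Cx.locks_append_s3]
            simp [Cx.append, Cx.locks]
          have h6 : ((Δ₀₀.lock ν').append Θ).locks = Θ.locks ≫ (ν' ≫ Δ₀₀.locks) := by
            rw [Cx.locks_append_s3]
            simp [Cx.locks]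
          rw [h6]
          exact (h5 ▸ hl) ≫ Bicategory.whiskerLeft Θ.locks
            (Bicategory.whiskerRight β Δ₀₀.locks)
        rw [goal]
        exact Der.var _ μ φ _ hl2

end CutAdmissible5
section CutAdmissible6
variable {Md : Type u} [Bicategory.{w, v, u} Md] [Bicategory.Strict Md]

/-- A single lock carrying the composite of the locks of a context `Θ` can be
replaced by `Θ` itself. -/
theorem Der.lock_to_ctx {a m : Md} (Γ : Cx Md a m) :
    ∀ {p b : Md} (Θ : Cx Md m p) (Ω : Cx Md p b) {φ : Fm Md b},
      Der ((Γ.lock Θ.locks).append Ω) φ → Der ((Γ.append Θ).append Ω) φ := by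
  intro p b Θ
  induction Θ with
  | nil =>
    intro Ω φ h
    have : Der (Γ.append Ω) φ :=
      Der.conv (CxEq.append_right (CxEq.lock_id Γ) Ω) (by simpa [Cx.locks] using h)
    simpa [Cx.append] using this
  | ext Θ' ρ χ ih =>
    intro Ω φ h
    have h' : Der ((Γ.lock Θ'.locks).append Ω) φ := by simpa [Cx.locks] using h
    have := Der.weak (Γ.append Θ') ρ χ Ω (ih Ω h')
    simpa [Cx.append] using this
  | lock Θ' ρ ih =>
    intro Ω φ h
    have h2 : Der (((Γ.lock Θ'.locks).lock ρ).append Ω) φ :=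
      Der.conv (CxEq.append_right (CxEq.lock_comp Γ Θ'.locks ρ).symm Ω)
        (by simpa [Cx.locks] using h)
    have e : ((Γ.lock Θ'.locks).lock ρ).append Ω =
        (Γ.lock Θ'.locks).append ((Cx.nil.lock ρ).append Ω) := by
      rw [← Cx.append_assoc_s3]
      simp [Cx.append]
    rw [e] at h2
    have := ih ((Cx.nil.lock ρ).append Ω) h2
    rw [← Cx.append_assoc_s3] at this
    simpa [Cx.append] using this

/-- The cut relation. -/
def CutRel {a b : Md} (C C' : Cx Md a b) : Prop :=
  ∃ (m n : Md) (Γ : Cx Md a m) (μ : n ⟶ m) (φ : Fm Md n) (Θ : Cx Md m b),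
    Der (Γ.lock μ) φ ∧ CxEq C ((Γ.ext μ φ).append Θ) ∧ CxEq C' (Γ.append Θ)

theorem Der.cut' {a m n b : Md} (Γ : Cx Md a m) (μ : n ⟶ m) (φ : Fm Md n)
    (Δ : Cx Md m b) (ψ : Fm Md b) (h₁ : Der (Γ.lock μ) φ)
    (h₂ : Der ((Γ.ext μ φ).append Δ) ψ) : Der (Γ.append Δ) ψ := by
  refine Der.gen (fun {a b} C C' => CutRel C C') ?hext ?hlock ?hconv ?hvar h₂
    ⟨m, n, Γ, μ, φ, Δ, h₁, .refl _, .refl _⟩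
  case hext =>
    rintro a b k C C' ρ χ ⟨m, n, Γ, μ, φ, Θ, hD, c1, c2⟩
    exact ⟨m, n, Γ, μ, φ, Θ.ext ρ χ, hD, by simpa [Cx.append] using CxEq.ext ρ χ c1,
      by simpa [Cx.append] using CxEq.ext ρ χ c2⟩
  case hlock =>
    rintro a b k C C' ρ ⟨m, n, Γ, μ, φ, Θ, hD, c1, c2⟩
    exact ⟨m, n, Γ, μ, φ, Θ.lock ρ, hD, by simpa [Cx.append] using CxEq.lock ρ c1,
      by simpa [Cx.append] using CxEq.lock ρ c2⟩
  case hconv =>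
    rintro a b C D C' hCD ⟨m, n, Γ, μ, φ, Θ, hD, c1, c2⟩
    exact ⟨m, n, Γ, μ, φ, Θ, hD, hCD.trans c1, c2⟩
  case hvar =>
    rintro a m' k Γ' μ' φ' Δ' α C' ⟨m, n, Γ₀, μ, φ, Θ, hD, c1, c2⟩
    obtain ⟨Γ₂, Δ₂, e2, d1, d2⟩ := c1.tr.1 Γ' μ' φ' Δ' rfl
    have hl : μ' ⟶ Δ₂.locks := d2.locks_eq ▸ α
    refine Der.conv c2.symm ?_
    rcases Cx.split_s3 Θ (Γ₀.ext μ φ) Γ₂ μ' φ' Δ₂ e2 with ⟨Θ₀, e3, e4⟩ | ⟨Δ₀, e3, e4⟩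
    · have goal : (Γ₀.append Θ) = ((Γ₀.append Θ₀).ext μ' φ').append Δ₂ := by
        rw [e4]
        rw [show (Θ₀.ext μ' φ') = Θ₀.append (Cx.nil.ext μ' φ') by simp [Cx.append],
          ← Cx.append_assoc_s3, ← Cx.append_assoc_s3]
        simp [Cx.append]
      rw [goal]
      exact Der.var _ μ' φ' Δ₂ hl
    · cases Δ₀ with
      | nil =>
        simp only [Cx.append] at e3
        injection e3 with h1 h2 h3 h4 h5
        subst h1
        obtain rfl := eq_of_heq h4
        obtain rfl := eq_of_heq h5
        subst h3
        rw [Cx.nil_append] at e4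
        subst e4
        -- the cut variable itself
        have hk : Der ((Γ₀.lock Δ₂.locks).append Cx.nil) φ := by
          refine Der.key Γ₀ hl Cx.nil ?_
          simpa [Cx.append] using hD
        have := Der.lock_to_ctx Γ₀ Δ₂ Cx.nil hk
        simpa [Cx.append] using this
      | ext Δ₀₀ ρ χ =>
        simp only [Cx.append] at e3
        injection e3 with h1 h2 h3 h4 h5
        subst h1
        obtain rfl := eq_of_heq h4
        obtain rfl := eq_of_heq h5
        have goal : (Γ₀.append Θ) = (Γ₂.ext μ' φ').append (Δ₀₀.append Θ) := by
          rw [h3, Cx.append_assoc_s3]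
        have hl2 : μ' ⟶ (Δ₀₀.append Θ).locks := by
          have h5 : Δ₂.locks = (Δ₀₀.append Θ).locks := by
            rw [e4, Cx.locks_append_s3, Cx.locks_append_s3]
            simp [Cx.locks]
          exact h5 ▸ hl
        rw [goal]
        exact Der.var _ μ' φ' _ hl2
      | lock Δ₀₀ ρ =>
        simp only [Cx.append] at e3
        injection e3

end CutAdmissible6


/-- The **modal cut rule** is admissible: if `Γ,🔒_μ ⊢ φ @ n` and
`Γ, φ@μ, Δ ⊢ ψ @ b`, then `Γ, Δ ⊢ ψ @ b`. -/
theorem Der.cut {Md : Type u} [Bicategory.{w, v, u} Md] [Bicategory.Strict Md]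
    {a m n b : Md} (Γ : Cx Md a m) (μ : n ⟶ m) (φ : Fm Md n) (Δ : Cx Md m b)
    (ψ : Fm Md b) (h₁ : Der (Γ.lock μ) φ) (h₂ : Der ((Γ.ext μ φ).append Δ) ψ) :
    Der (Γ.append Δ) ψ := by
  exact Der.cut' Γ μ φ Δ ψ h₁ h₂
end

section
/- A tagged form of the K axiom is derivable: for any modality μ : n → m and formulas φ, ψ wff@n, the context (φ →_{1_n} ψ)@μ, φ@μ derives ⟨μ|ψ⟩ at mode m, i.e. (φ →_{1_n} ψ)@μ, φ@μ ⊢ ⟨μ|ψ⟩ @ m. -/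
/-!
Multimodal intuitionistic logic (MTT's logical fragment), parametrized by a
mode theory, i.e. a strict 2-category `Md`: objects are modes, 1-cells are
modalities, 2-cells are transformations.
-/

open CategoryTheory

universe w v u

variable {Md : Type u} [Bicategory.{w, v, u} Md]

/-- A tagged form of the **K axiom** is derivable: for `μ : n ⟶ m` and
`φ, ψ` wff at `n`, we have `(φ →_{1_n} ψ)@μ, φ@μ ⊢ ⟨μ|ψ⟩ @ m`. -/
theorem Der.tagged_K {Md : Type u} [Bicategory.{w, v, u} Md] [Bicategory.Strict Md]
    {n m : Md} (μ : n ⟶ m) (φ ψ : Fm Md n) :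
    Der (((Cx.nil : Cx Md m m).ext μ (.impl (𝟙 n) φ ψ)).ext μ φ) (.mod μ ψ) := by
  apply Der.modI
  apply Der.implE (φ := φ) (μ := 𝟙 n)
  · simpa [Cx.append] using
      Der.var Cx.nil μ (.impl (𝟙 n) φ ψ) ((Cx.nil.ext μ φ).lock μ)
        (eqToHom (by simp [Cx.locks]))
  · apply Der.conv (CxEq.symm (CxEq.lock_id _))
    simpa [Cx.append] using
      Der.var (Cx.nil.ext μ (.impl (𝟙 n) φ ψ)) μ φ (Cx.nil.lock μ)
        (eqToHom (by simp [Cx.locks]))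
end

section
/- The K axiom holds for every modality: for any modality μ : n → m and formulas φ, ψ wff@n, writing χ → θ for χ →_{1_m} θ, the formula ⟨μ|φ →_{1_n} ψ⟩ → (⟨μ|φ⟩ → ⟨μ|ψ⟩) is a theorem: it is derivable at mode m from the empty context. -/
/-!
Multimodal intuitionistic logic (MTT's logical fragment), parametrized by a
mode theory, i.e. a strict 2-category `Md`: objects are modes, 1-cells are
modalities, 2-cells are transformations.
-/

open CategoryTheory

universe w v u

variable {Md : Type u} [Bicategory.{w, v, u} Md]

/-- The **K axiom** holds for every modality: writing `χ → θ` for `χ →_{1_m} θ`,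
the formula `⟨μ|φ →_{1_n} ψ⟩ → (⟨μ|φ⟩ → ⟨μ|ψ⟩)` is derivable at mode `m` from
the empty context. -/
theorem Der.axiom_K {Md : Type u} [Bicategory.{w, v, u} Md] [Bicategory.Strict Md]
    {n m : Md} (μ : n ⟶ m) (φ ψ : Fm Md n) :
    Der (Cx.nil : Cx Md m m)
      (.impl (𝟙 m) (.mod μ (.impl (𝟙 n) φ ψ))
        (.impl (𝟙 m) (.mod μ φ) (.mod μ ψ))) := by
  apply Der.implI
  apply Der.implI
  -- Γ = nil, ⟨μ|φ→ψ⟩@𝟙, ⟨μ|φ⟩@𝟙 ⊢ ⟨μ|ψ⟩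
  apply Der.modE (ν := μ) (μ := 𝟙 m) (φ := .impl (𝟙 n) φ ψ)
  · have h := Der.var Cx.nil (𝟙 m) (.mod μ (.impl (𝟙 n) φ ψ))
      (Cx.nil.ext (𝟙 m) (.mod μ φ)) (eqToHom (by simp [Cx.locks]))
    simp only [Cx.append] at h
    exact Der.conv (CxEq.symm (CxEq.lock_id _)) h
  -- Γ₁ = Γ, (φ→ψ)@(μ≫𝟙) ⊢ ⟨μ|ψ⟩
  apply Der.modE (ν := μ) (μ := 𝟙 m) (φ := φ)
  · have h := Der.var (Cx.nil.ext (𝟙 m) (.mod μ (.impl (𝟙 n) φ ψ))) (𝟙 m)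
      (.mod μ φ) (Cx.nil.ext (μ ≫ 𝟙 m) (.impl (𝟙 n) φ ψ)) (eqToHom (by simp [Cx.locks]))
    simp only [Cx.append] at h
    exact Der.conv (CxEq.symm (CxEq.lock_id _)) h
  -- Γ₂ = Γ₁, φ@(μ≫𝟙) ⊢ ⟨μ|ψ⟩
  apply Der.modI
  apply Der.implE (μ := 𝟙 n) (φ := φ)
  · have h := Der.var ((Cx.nil.ext (𝟙 m) (.mod μ (.impl (𝟙 n) φ ψ))).ext (𝟙 m)
      (.mod μ φ)) (μ ≫ 𝟙 m) (.impl (𝟙 n) φ ψ)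
      ((Cx.nil.ext (μ ≫ 𝟙 m) φ).lock μ) (eqToHom (by simp [Cx.locks]))
    simp only [Cx.append] at h
    exact h
  · have h := Der.var (((Cx.nil.ext (𝟙 m) (.mod μ (.impl (𝟙 n) φ ψ))).ext (𝟙 m)
      (.mod μ φ)).ext (μ ≫ 𝟙 m) (.impl (𝟙 n) φ ψ)) (μ ≫ 𝟙 m) φ
      (Cx.nil.lock μ) (eqToHom (by simp [Cx.locks]))
    simp only [Cx.append] at h
    exact Der.conv (CxEq.symm (CxEq.lock_id _)) h
end

section
/- Every modality preserves conjunction: for any modality μ : n → m and formulas φ, ψ wff@n, writing χ → θ for χ →_{1_m} θ and χ ↔ θ for (χ → θ) ∧ (θ → χ), the formula ⟨μ|φ ∧ ψ⟩ ↔ ⟨μ|φ⟩ ∧ ⟨μ|ψ⟩ is a theorem: it is derivable at mode m from the empty context. -/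
/-!
Multimodal intuitionistic logic (MTT's logical fragment), parametrized by a
mode theory, i.e. a strict 2-category `Md`: objects are modes, 1-cells are
modalities, 2-cells are transformations.
-/

open CategoryTheory

universe w v u

variable {Md : Type u} [Bicategory.{w, v, u} Md]

/-- Intuitionistic biimplication at mode `m`:
`χ ↔ θ := (χ →_{1_m} θ) ∧ (θ →_{1_m} χ)`. -/
def Fm.iff {Md : Type u} [Bicategory.{w, v, u} Md] {m : Md} (χ θ : Fm Md m) : Fm Md m :=
  (Fm.impl (𝟙 m) χ θ).conj (Fm.impl (𝟙 m) θ χ)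

/-- Every modality preserves conjunction: the formula
`⟨μ|φ ∧ ψ⟩ ↔ ⟨μ|φ⟩ ∧ ⟨μ|ψ⟩` is derivable at mode `m` from the empty context. -/
theorem Der.mod_conj {Md : Type u} [Bicategory.{w, v, u} Md] [Bicategory.Strict Md]
    {n m : Md} (μ : n ⟶ m) (φ ψ : Fm Md n) :
    Der (Cx.nil : Cx Md m m)
      (Fm.iff (.mod μ (φ.conj ψ)) ((Fm.mod μ φ).conj (Fm.mod μ ψ))) := by
  refine Der.conjI (Der.implI ?_) (Der.implI ?_)
  · -- ⟨μ|φ∧ψ⟩ ⊢ ⟨μ|φ⟩ ∧ ⟨μ|ψ⟩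
    set Γ : Cx Md m m := Cx.nil.ext (𝟙 m) (Fm.mod μ (φ.conj ψ)) with hΓ
    refine Der.modE (ν := μ) (μ := 𝟙 m) (φ := φ.conj ψ)
      (Der.conv (CxEq.symm (CxEq.lock_id Γ)) ?_) ?_
    · have h := Der.var Cx.nil (𝟙 m) (Fm.mod μ (φ.conj ψ)) Cx.nil
        (eqToHom (by simp [Cx.locks]))
      simpa [Cx.append] using h
    · refine Der.conjI (Der.modI ?_) (Der.modI ?_)
      · have h := Der.var Γ (μ ≫ 𝟙 m) (φ.conj ψ) (Cx.nil.lock μ)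
          (eqToHom (by simp [Cx.locks]))
        simp only [Cx.append] at h
        exact Der.conjE₁ h
      · have h := Der.var Γ (μ ≫ 𝟙 m) (φ.conj ψ) (Cx.nil.lock μ)
          (eqToHom (by simp [Cx.locks]))
        simp only [Cx.append] at h
        exact Der.conjE₂ h
  · -- ⟨μ|φ⟩ ∧ ⟨μ|ψ⟩ ⊢ ⟨μ|φ∧ψ⟩
    set Γ : Cx Md m m := Cx.nil.ext (𝟙 m) ((Fm.mod μ φ).conj (Fm.mod μ ψ)) with hΓ
    refine Der.modE (ν := μ) (μ := 𝟙 m) (φ := φ)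
      (Der.conv (CxEq.symm (CxEq.lock_id Γ)) ?_) ?_
    · have h := Der.var Cx.nil (𝟙 m) ((Fm.mod μ φ).conj (Fm.mod μ ψ)) Cx.nil
        (eqToHom (by simp [Cx.locks]))
      simp only [Cx.append] at h
      exact Der.conjE₁ h
    · set Γ₁ : Cx Md m m := Γ.ext (μ ≫ 𝟙 m) φ with hΓ₁
      refine Der.modE (ν := μ) (μ := 𝟙 m) (φ := ψ)
        (Der.conv (CxEq.symm (CxEq.lock_id Γ₁)) ?_) ?_
      · have h := Der.var Cx.nil (𝟙 m) ((Fm.mod μ φ).conj (Fm.mod μ ψ))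
          (Cx.nil.ext (μ ≫ 𝟙 m) φ) (eqToHom (by simp [Cx.locks]))
        simp only [Cx.append] at h
        exact Der.conjE₂ h
      · refine Der.modI (Der.conjI ?_ ?_)
        · have h := Der.var Γ (μ ≫ 𝟙 m) φ ((Cx.nil.ext (μ ≫ 𝟙 m) ψ).lock μ)
            (eqToHom (by simp [Cx.locks]))
          simp only [Cx.append] at h
          exact h
        · have h := Der.var Γ₁ (μ ≫ 𝟙 m) ψ (Cx.nil.lock μ)
            (eqToHom (by simp [Cx.locks]))
          simp only [Cx.append] at h
          exact h
end

section
/- Composite modalities decompose: for any modalities ν : o → n and μ : n → m and formula φ wff@o, writing χ → θ for χ →_{1_m} θ and χ ↔ θ for (χ → θ) ∧ (θ → χ), the formula ⟨μ|⟨ν|φ⟩⟩ ↔ ⟨μ∘ν|φ⟩ is a theorem: it is derivable at mode m from the empty context. -/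
/-!
Multimodal intuitionistic logic (MTT's logical fragment), parametrized by a
mode theory, i.e. a strict 2-category `Md`: objects are modes, 1-cells are
modalities, 2-cells are transformations.
-/

open CategoryTheory

universe w v u

variable {Md : Type u} [Bicategory.{w, v, u} Md]

/-- Composite modalities decompose: for `ν : o ⟶ n`, `μ : n ⟶ m` and `φ` wff
at `o`, the formula `⟨μ|⟨ν|φ⟩⟩ ↔ ⟨μ∘ν|φ⟩` is derivable at mode `m` from the
empty context. -/
theorem Der.mod_comp {Md : Type u} [Bicategory.{w, v, u} Md] [Bicategory.Strict Md]
    {o n m : Md} (ν : o ⟶ n) (μ : n ⟶ m) (φ : Fm Md o) :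
    Der (Cx.nil : Cx Md m m)
      (Fm.iff (.mod μ (.mod ν φ)) (.mod (ν ≫ μ) φ)) := by
  unfold Fm.iff
  apply Der.conjI
  · apply Der.implI
    refine Der.modE (ν := μ) (μ := 𝟙 m) (φ := Fm.mod ν φ) ?_ ?_
    · refine Der.conv (CxEq.symm (CxEq.lock_id _)) ?_
      have h := Der.var Cx.nil (𝟙 m) (Fm.mod μ (Fm.mod ν φ)) Cx.nil
        (eqToHom (by simp [Cx.locks]))
      simpa [Cx.append] using h
    rw [Category.comp_id]
    refine Der.modE (ν := ν) (μ := μ) (φ := φ) ?_ ?_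
    · have h := Der.var (Cx.nil.ext (𝟙 m) (Fm.mod μ (Fm.mod ν φ))) μ (Fm.mod ν φ)
        (Cx.lock .nil μ) (eqToHom (by simp [Cx.locks]))
      simpa [Cx.append] using h
    apply Der.modI
    have h := Der.var ((Cx.nil.ext (𝟙 m) (Fm.mod μ (Fm.mod ν φ))).ext μ (Fm.mod ν φ))
      (ν ≫ μ) φ (Cx.lock .nil (ν ≫ μ)) (eqToHom (by simp [Cx.locks]))
    simpa [Cx.append] using h
  · apply Der.implI
    refine Der.modE (ν := ν ≫ μ) (μ := 𝟙 m) (φ := φ) ?_ ?_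
    · refine Der.conv (CxEq.symm (CxEq.lock_id _)) ?_
      have h := Der.var Cx.nil (𝟙 m) (Fm.mod (ν ≫ μ) φ) Cx.nil
        (eqToHom (by simp [Cx.locks]))
      simpa [Cx.append] using h
    rw [Category.comp_id]
    apply Der.modI
    apply Der.modI
    have h := Der.var (Cx.nil.ext (𝟙 m) (Fm.mod (ν ≫ μ) φ)) (ν ≫ μ) φ
      ((Cx.lock .nil μ).lock ν) (eqToHom (by simp [Cx.locks]))
    simpa [Cx.append] using h
end

section
/- Transformations of the mode theory become provable implications between modal formulas: for any parallel modalities μ, ν : n → m, any transformation α : μ ⇒ ν, and any formula φ wff@n, writing χ → θ for χ →_{1_m} θ, the formula ⟨μ|φ⟩ → ⟨ν|φ⟩ is a theorem: it is derivable at mode m from the empty context. -/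
/-!
Multimodal intuitionistic logic (MTT's logical fragment), parametrized by a
mode theory, i.e. a strict 2-category `Md`: objects are modes, 1-cells are
modalities, 2-cells are transformations.
-/

open CategoryTheory

universe w v u

variable {Md : Type u} [Bicategory.{w, v, u} Md]

/-- Transformations of the mode theory become provable implications between
modal formulas: for parallel modalities `μ, ν : n ⟶ m`, a transformation
`α : μ ⇒ ν`, and `φ` wff at `n`, the formula `⟨μ|φ⟩ → ⟨ν|φ⟩` is derivable at
mode `m` from the empty context. -/
theorem Der.transformation_implies {Md : Type u} [Bicategory.{w, v, u} Md]
    [Bicategory.Strict Md] {n m : Md} {μ ν : n ⟶ m} (α : μ ⟶ ν) (φ : Fm Md n) :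
    Der (Cx.nil : Cx Md m m) (.impl (𝟙 m) (.mod μ φ) (.mod ν φ)) := by
  apply Der.implI
  set Γ : Cx Md m m := Cx.ext .nil (𝟙 m) (.mod μ φ) with hΓ
  have h1 : Der (Γ.lock (𝟙 m)) (.mod μ φ) := by
    apply Der.conv (CxEq.symm (CxEq.lock_id Γ))
    have e : (Cx.ext .nil (𝟙 m) (Fm.mod μ φ)).append (.nil : Cx Md m m) = Γ := by
      simp [Cx.append, hΓ]
    exact e ▸ Der.var .nil (𝟙 m) (.mod μ φ) .nil (eqToHom (by simp [Cx.locks]))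
  have h2 : Der (Γ.ext μ φ) (.mod ν φ) := by
    apply Der.modI
    have e : (Γ.ext μ φ).append (Cx.nil.lock ν) = (Γ.ext μ φ).lock ν := by
      simp [Cx.append]
    exact e ▸ Der.var Γ μ φ (Cx.lock .nil ν)
      (α ≫ eqToHom (by simp [Cx.locks]))
  have h2' : Der (Γ.ext (μ ≫ 𝟙 m) φ) (.mod ν φ) := by
    rw [Category.comp_id]; exact h2
  exact Der.modE h1 h2'
end
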